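/- Let G be a group containing a finite normal subgroup A such that the quotient G/A is infinite cyclic. Then there exists an integer N ≥ 1 such that g^N lies in the center of G for every g ∈ G. -/

import Mathlib

/-!
Conjugation gives a homomorphism `G →* MulAut A` into a finite group, so the centralizer of `A` has
finite index `d`, and `c := g ^ d` centralizes `A`. Since `G ⧸ A` is abelian, `a := ⁅c, h⁆`
lies in `A` for every `h`; as `c` commutes with `a`, conjugating `h` by `c ^ k` multiplies it by
`a ^ k`, so `c ^ |A|` commutes with `h`. Hence `N = d * |A|` works.
-/

open scoped commutatorElement

section

variable {G : Type*} [Group G]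

namespace Subgroup

theorem ker_conjNormal (A : Subgroup G) [A.Normal] :
    (MulAut.conjNormal : G →* MulAut A).ker = centralizer (A : Set G) := by
  ext c
  simp only [MonoidHom.mem_ker, mem_centralizer_iff, SetLike.mem_coe, MulEquiv.ext_iff,
    MulAut.one_apply, Subtype.ext_iff, MulAut.conjNormal_apply, Subtype.forall]
  refine forall₂_congr fun a _ => ?_
  rw [mul_inv_eq_iff_eq_mul, eq_comm]

instance finiteIndex_centralizer (A : Subgroup G) [A.Normal] [Finite A] :
    (centralizer (A : Set G)).FiniteIndex := by
  rw [← ker_conjNormal]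
  infer_instance

theorem commutatorElement_mem_of_commute_quotient {A : Subgroup G} [A.Normal] {c h : G}
    (hch : Commute (c : G ⧸ A) h) : ⁅c, h⁆ ∈ A := by
  rw [← QuotientGroup.eq_one_iff, ← QuotientGroup.mk'_apply, map_commutatorElement]
  exact commutatorElement_eq_one_iff_commute.mpr hch

end Subgroup

open Subgroup

theorem conj_pow_eq_commutatorElement_pow_mul {c h : G} (hc : Commute c ⁅c, h⁆) (k : ℕ) :
    c ^ k * h * (c ^ k)⁻¹ = ⁅c, h⁆ ^ k * h := by
  induction k with
  | zero => simp
  | succ k ih =>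
    calc c ^ (k + 1) * h * (c ^ (k + 1))⁻¹ = c * (c ^ k * h * (c ^ k)⁻¹) * c⁻¹ := by group
      _ = (c * ⁅c, h⁆ ^ k * c⁻¹) * (c * h * c⁻¹) := by rw [ih]; group
      _ = ⁅c, h⁆ ^ k * (⁅c, h⁆ * h) := by
        rw [(hc.pow_right k).eq, mul_inv_cancel_right, commutatorElement_def, inv_mul_cancel_right]
      _ = ⁅c, h⁆ ^ (k + 1) * h := by rw [pow_succ, mul_assoc]

theorem commute_pow_card_of_mem_centralizer {A : Subgroup G} [Finite A] {c h : G}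
    (hc : c ∈ centralizer (A : Set G)) (hch : ⁅c, h⁆ ∈ A) : Commute (c ^ Nat.card A) h := by
  have hca : Commute c ⁅c, h⁆ := (mem_centralizer_iff.mp hc _ hch).symm
  have hpow : ⁅c, h⁆ ^ Nat.card A = 1 :=
    congrArg Subtype.val (pow_card_eq_one' (x := (⟨_, hch⟩ : A)))
  have := conj_pow_eq_commutatorElement_pow_mul hca (Nat.card A)
  rw [hpow, one_mul, mul_inv_eq_iff_eq_mul] at this
  exact this

theorem exists_pow_mem_center_of_finite_of_commute_quotient (A : Subgroup G) [A.Normal]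
    [Finite A] (hcomm : ∀ x y : G ⧸ A, Commute x y) :
    ∃ N : ℕ, 0 < N ∧ ∀ g : G, g ^ N ∈ center G := by
  refine ⟨(centralizer (A : Set G)).index * Nat.card A,
    Nat.mul_pos FiniteIndex.index_ne_zero.bot_lt Nat.card_pos, fun g => ?_⟩
  rw [pow_mul, mem_center_iff]
  intro h
  set c := g ^ (centralizer (A : Set G)).index
  have hch : ⁅c, h⁆ ∈ A := commutatorElement_mem_of_commute_quotient (hcomm c h)
  exact (commute_pow_card_of_mem_centralizer (pow_index_mem _ g) hch).eq.symm

end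

/-- If a group `G` has a finite normal subgroup `A` with `G/A` infinite cyclic,
then some fixed positive power of every element of `G` is central. -/
theorem pow_central_of_finite_by_infinite_cyclic
    (G : Type*) [Group G] (A : Subgroup G) [A.Normal] [Finite A]
    (hcyc : Nonempty ((G ⧸ A) ≃* Multiplicative ℤ)) :
    ∃ N : ℕ, 1 ≤ N ∧ ∀ g : G, g ^ N ∈ Subgroup.center G := by
  obtain ⟨e⟩ := hcyc
  exact exists_pow_mem_center_of_finite_of_commute_quotient A fun x y => by
    simpa using (Commute.all (e x) (e y)).map e.symm
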